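/- Let k ∈ ℤ and let f : ℍ → ℂ be a smooth function satisfying the weight k hyperbolic Laplace equation Δ_k f = 0, where Δ_k = −y²(∂²/∂x² + ∂²/∂y²) + iky(∂/∂x + i∂/∂y). Then the function ξ_k(f)(τ) := y^{k−2} · conj(L_k f(τ)), with L_k = −2iy² ∂/∂τ̄, is holomorphic on ℍ. -/

import Mathlib

open Complex Real

/-- The partial derivative `∂/∂x`. -/
noncomputable def px (f : ℂ → ℂ) (z : ℂ) : ℂ := fderiv ℝ f z 1

/-- The partial derivative `∂/∂y`. -/
noncomputable def py (f : ℂ → ℂ) (z : ℂ) : ℂ := fderiv ℝ f z Complex.I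

/-- The Wirtinger derivative `∂/∂τ̄ = (1/2)(∂/∂x + i ∂/∂y)`. -/
noncomputable def dtaubar (f : ℂ → ℂ) (z : ℂ) : ℂ :=
  (1 / 2 : ℂ) * (px f z + Complex.I * py f z)

/-- The weight `k` hyperbolic Laplace operator
`Δ_k = −y²(∂²/∂x² + ∂²/∂y²) + iky(∂/∂x + i ∂/∂y)`. -/
noncomputable def hypLaplacian (k : ℤ) (f : ℂ → ℂ) (z : ℂ) : ℂ :=
  -(z.im : ℂ) ^ 2 * (px (px f) z + py (py f) z) +
    Complex.I * (k : ℂ) * (z.im : ℂ) * (px f z + Complex.I * py f z)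

/-- The antilinear operator `ξ_k(f)(τ) = y^{k−2} conj(−2iy² ∂f/∂τ̄)`. -/
noncomputable def xiOp (k : ℤ) (f : ℂ → ℂ) (z : ℂ) : ℂ :=
  ((z.im : ℂ)) ^ (k - 2) *
    (starRingEnd ℂ) (-2 * Complex.I * (z.im : ℂ) ^ 2 * dtaubar f z)

/- ==================== auxiliary lemmas ==================== -/

private lemma smooth_pd {f : ℂ → ℂ} (hf : ContDiff ℝ (⊤ : ℕ∞) f) (v : ℂ) :
    ContDiff ℝ (⊤ : ℕ∞) (fun z => fderiv ℝ f z v) :=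
  (hf.fderiv_right (by simp)).clm_apply contDiff_const

private lemma fderiv_mul_apply {a b : ℂ → ℂ} {z v : ℂ} (ha : DifferentiableAt ℝ a z)
    (hb : DifferentiableAt ℝ b z) :
    fderiv ℝ (fun w => a w * b w) z v = fderiv ℝ a z v * b z + a z * fderiv ℝ b z v := by
  rw [fderiv_fun_mul ha hb]
  simp only [ContinuousLinearMap.add_apply, ContinuousLinearMap.smul_apply, smul_eq_mul]
  ring

private lemma conj_hasFDerivAt {h : ℂ → ℂ} {z : ℂ} (hd : DifferentiableAt ℝ h z) :
    HasFDerivAt (fun w => (starRingEnd ℂ) (h w))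
      ((Complex.conjCLE.toContinuousLinearMap).comp (fderiv ℝ h z)) z := by
  have := Complex.conjCLE.toContinuousLinearMap.hasFDerivAt.comp z hd.hasFDerivAt
  exact this

private lemma fderiv_conj_apply {h : ℂ → ℂ} {z : ℂ} (hd : DifferentiableAt ℝ h z) (v : ℂ) :
    fderiv ℝ (fun w => (starRingEnd ℂ) (h w)) z v = (starRingEnd ℂ) (fderiv ℝ h z v) := by
  rw [(conj_hasFDerivAt hd).fderiv]
  simp

private lemma hasFDerivAt_impow (k : ℤ) {z : ℂ} (hz : z.im ≠ 0) :
    HasFDerivAt (fun w : ℂ => ((w.im : ℂ)) ^ k)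
      ((((k : ℂ)) * (z.im : ℂ) ^ (k - 1)) • (Complex.ofRealCLM.comp Complex.imCLM)) z := by
  have h1 : HasDerivAt (fun u : ℂ => u ^ k) ((k : ℂ) * ((z.im : ℂ)) ^ (k - 1)) ((z.im : ℂ)) :=
    hasDerivAt_zpow k _ (Or.inl (by exact_mod_cast hz))
  have h2 : HasFDerivAt (fun w : ℂ => ((w.im : ℂ)))
      (Complex.ofRealCLM.comp Complex.imCLM) z :=
    (Complex.ofRealCLM.comp Complex.imCLM).hasFDerivAt
  have h3 := (h1.hasFDerivAt.restrictScalars ℝ).comp z h2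
  refine HasFDerivAt.congr_fderiv h3 ?_
  ext w
  simp [mul_comm]

private lemma pd_comm {f : ℂ → ℂ} (hf : ContDiff ℝ (⊤ : ℕ∞) f) (z v w : ℂ) :
    fderiv ℝ (fun u => fderiv ℝ f u v) z w = fderiv ℝ (fun u => fderiv ℝ f u w) z v := by
  have hsym := (hf.contDiffAt (x := z)).isSymmSndFDerivAt (by rw [minSmoothness_of_isRCLikeNormedField]; exact WithTop.coe_le_coe.mpr le_top)
  have hdd : DifferentiableAt ℝ (fderiv ℝ f) z :=
    ((hf.fderiv_right (m := 1) (by exact WithTop.coe_le_coe.mpr le_top)).differentiable one_ne_zero).differentiableAt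
  have e : ∀ a b : ℂ, fderiv ℝ (fun u => fderiv ℝ f u a) z b
      = fderiv ℝ (fderiv ℝ f) z b a := by
    intro a b
    rw [fderiv_clm_apply hdd (differentiableAt_const a)]
    simp
  rw [e, e, hsym w v]

private lemma holo_of_cr {g : ℂ → ℂ} {z : ℂ} (hg : DifferentiableAt ℝ g z)
    (hcr : fderiv ℝ g z Complex.I = Complex.I * fderiv ℝ g z 1) :
    DifferentiableAt ℂ g z := by
  set c := fderiv ℝ g z 1 with hc
  have hTL : fderiv ℝ g z = (c • ContinuousLinearMap.id ℂ ℂ).restrictScalars ℝ := by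
    ext1 w
    have h1 : fderiv ℝ g z w = w.re • c + w.im • (Complex.I * c) := by
      conv_lhs => rw [← Complex.re_add_im w]
      rw [show (w.re : ℂ) + (w.im : ℂ) * Complex.I
            = (w.re : ℝ) • (1 : ℂ) + (w.im : ℝ) • Complex.I by
          simp [Complex.real_smul]]
      rw [map_add, map_smul, map_smul, hcr, ← hc]
    rw [h1]
    simp only [ContinuousLinearMap.coe_restrictScalars', ContinuousLinearMap.smul_apply,
      ContinuousLinearMap.id_apply, smul_eq_mul, Complex.real_smul]
    calc (w.re : ℂ) * c + (w.im : ℂ) * (Complex.I * c)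
        = c * ((w.re : ℂ) + (w.im : ℂ) * Complex.I) := by ring
      _ = c * w := by rw [Complex.re_add_im]
  have hL : HasFDerivAt g ((c • ContinuousLinearMap.id ℂ ℂ).restrictScalars ℝ) z := by
    rw [← hTL]; exact hg.hasFDerivAt
  exact ⟨c • ContinuousLinearMap.id ℂ ℂ, hasFDerivAt_of_restrictScalars ℝ hL rfl⟩

/-- If `f` is smooth and `Δ_k f = 0` on the upper half plane,
then `ξ_k(f)` is holomorphic on the upper half plane. -/
theorem xi_of_harmonic_is_holomorphic (k : ℤ) (f : ℂ → ℂ)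
    (hsm : ContDiff ℝ (⊤ : ℕ∞) f)
    (hharm : ∀ z : ℂ, 0 < z.im → hypLaplacian k f z = 0) :
    ∀ z : ℂ, 0 < z.im → DifferentiableAt ℂ (xiOp k f) z := by
  intro z hz
  have hf : ContDiff ℝ (⊤ : ℕ∞) f := hsm
  set y : ℂ := (z.im : ℂ) with hy_def
  have hy : y ≠ 0 := by
    simp only [hy_def, ne_eq, Complex.ofReal_eq_zero]
    exact hz.ne'
  -- smoothness of the derivative pieces
  have hpx : ContDiff ℝ (⊤ : ℕ∞) (px f) := smooth_pd hf 1
  have hpy : ContDiff ℝ (⊤ : ℕ∞) (py f) := smooth_pd hf Complex.I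
  have hD : ContDiff ℝ (⊤ : ℕ∞) (dtaubar f) := by
    have : ContDiff ℝ (⊤ : ℕ∞) (fun w => (1 / 2 : ℂ) * (px f w + Complex.I * py f w)) :=
      contDiff_const.mul (hpx.add (contDiff_const.mul hpy))
    exact this
  have hDd : DifferentiableAt ℝ (dtaubar f) z := (hD.differentiable (by simp)).differentiableAt
  -- eventual equality
  have hne : ∀ᶠ w in nhds z, w.im ≠ 0 :=
    Complex.continuous_im.continuousAt.eventually_ne hz.ne'
  have heq : xiOp k f =ᶠ[nhds z]
      (fun w => 2 * Complex.I *
        (((w.im : ℂ)) ^ k * (starRingEnd ℂ) (dtaubar f w))) := by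
    filter_upwards [hne] with w hw
    have hwy : ((w.im : ℂ)) ≠ 0 := by
      simpa using hw
    have hsplit : ((w.im : ℂ)) ^ k = ((w.im : ℂ)) ^ (k - 2) * ((w.im : ℂ)) ^ (2 : ℕ) := by
      rw [← zpow_natCast ((w.im : ℂ)) 2, ← zpow_add₀ hwy]
      norm_num
    unfold xiOp
    simp only [map_mul, map_neg, map_ofNat, Complex.conj_I, map_pow, Complex.conj_ofReal]
    rw [hsplit]
    ring
  rw [heq.differentiableAt_iff]
  set g : ℂ → ℂ := fun w => 2 * Complex.I *
      (((w.im : ℂ)) ^ k * (starRingEnd ℂ) (dtaubar f w)) with hg_def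
  -- differentiability data
  have hA : DifferentiableAt ℝ (fun w : ℂ => ((w.im : ℂ)) ^ k) z :=
    (hasFDerivAt_impow k hz.ne').differentiableAt
  have hB : DifferentiableAt ℝ (fun w => (starRingEnd ℂ) (dtaubar f w)) z :=
    (conj_hasFDerivAt hDd).differentiableAt
  have hAB : DifferentiableAt ℝ
      (fun w => ((w.im : ℂ)) ^ k * (starRingEnd ℂ) (dtaubar f w)) z := hA.mul hB
  have hgd : DifferentiableAt ℝ g z := (hAB.const_mul _)
  -- derivative of g in direction v
  have hgv : ∀ v : ℂ, fderiv ℝ g z v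
      = 2 * Complex.I * (fderiv ℝ (fun w : ℂ => ((w.im : ℂ)) ^ k) z v
          * (starRingEnd ℂ) (dtaubar f z)
        + y ^ k * (starRingEnd ℂ) (fderiv ℝ (dtaubar f) z v)) := by
    intro v
    rw [hg_def]
    rw [fderiv_const_mul hAB]
    simp only [ContinuousLinearMap.smul_apply, smul_eq_mul]
    rw [fderiv_mul_apply hA hB, fderiv_conj_apply hDd]
  -- derivative of the power factor
  have hAf : fderiv ℝ (fun w : ℂ => ((w.im : ℂ)) ^ k) z
      = (((k : ℂ)) * y ^ (k - 1)) • (Complex.ofRealCLM.comp Complex.imCLM) :=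
    (hasFDerivAt_impow k hz.ne').fderiv
  have hA1 : fderiv ℝ (fun w : ℂ => ((w.im : ℂ)) ^ k) z 1 = 0 := by
    rw [hAf]; simp
  have hAI : fderiv ℝ (fun w : ℂ => ((w.im : ℂ)) ^ k) z Complex.I
      = (k : ℂ) * y ^ (k - 1) := by
    rw [hAf]; simp
  -- derivative of dtaubar f in direction v
  have hDf : ∀ v : ℂ, fderiv ℝ (dtaubar f) z v
      = (1 / 2 : ℂ) * (fderiv ℝ (px f) z v + Complex.I * fderiv ℝ (py f) z v) := by
    intro v
    have hpxd : DifferentiableAt ℝ (px f) z := (hpx.differentiable (by simp)).differentiableAt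
    have hpyd : DifferentiableAt ℝ (py f) z := (hpy.differentiable (by simp)).differentiableAt
    have e1 : dtaubar f = fun w => (1 / 2 : ℂ) * (px f w + Complex.I * py f w) := rfl
    rw [e1, fderiv_const_mul (show DifferentiableAt ℝ (fun w => px f w + Complex.I * py f w) z
      from hpxd.add (hpyd.const_mul _))]
    simp only [ContinuousLinearMap.smul_apply, smul_eq_mul]
    rw [fderiv_fun_add hpxd (hpyd.const_mul _)]
    simp only [ContinuousLinearMap.add_apply]
    rw [fderiv_const_mul hpyd]
    simp only [ContinuousLinearMap.smul_apply, smul_eq_mul]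
  -- symmetry of second derivatives
  have hsymm : fderiv ℝ (px f) z Complex.I = fderiv ℝ (py f) z 1 :=
    pd_comm hf z 1 Complex.I
  -- the harmonicity identity
  have h0 : -y ^ 2 * (fderiv ℝ (px f) z 1 + fderiv ℝ (py f) z Complex.I)
      + Complex.I * (k : ℂ) * y * (px f z + Complex.I * py f z) = 0 := hharm z hz
  have key : y * (fderiv ℝ (px f) z 1 + fderiv ℝ (py f) z Complex.I)
      = Complex.I * (k : ℂ) * (px f z + Complex.I * py f z) := by
    apply mul_left_cancel₀ hy
    linear_combination -h0
  have key' := congrArg (starRingEnd ℂ) key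
  simp only [map_mul, map_add, Complex.conj_I, map_intCast, hy_def, Complex.conj_ofReal]
    at key'
  rw [← hy_def] at key'
  -- conclude via Cauchy-Riemann
  apply holo_of_cr hgd
  rw [hgv 1, hgv Complex.I, hA1, hAI, hDf 1, hDf Complex.I, hsymm]
  have hykk : y ^ k = y ^ (k - 1) * y := by
    rw [← zpow_add_one₀ hy]
    norm_num
  simp only [map_mul, map_add, map_div₀, map_one, map_ofNat, Complex.conj_I, hy_def,
    Complex.conj_ofReal]
  rw [← hy_def, hykk]
  -- unfold dtaubar at z
  have hDz : dtaubar f z = (1 / 2 : ℂ) * (px f z + Complex.I * py f z) := rfl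
  rw [hDz]
  simp only [map_mul, map_add, map_div₀, map_one, map_ofNat, Complex.conj_I]
  have hI2 : Complex.I ^ 2 = -1 := Complex.I_sq
  linear_combination (y ^ (k - 1)) * key' +
    (Complex.I * y ^ (k - 1) * y * (starRingEnd ℂ) (fderiv ℝ (py f) z 1)
      - y ^ (k - 1) * y * (starRingEnd ℂ) (fderiv ℝ (py f) z Complex.I)
      - y ^ (k - 1) * y * (starRingEnd ℂ) (fderiv ℝ (px f) z 1)) * hI2
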